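/- arXiv:1309.1559 — 3 statements merged into one kernel-verified Lean document; each statement's English description precedes it below -/
import Mathlib

section
/- Let G be a graph, let F be a subset of its vertices, and let TF be a minimal triangulation of the induced subgraph G[F]. Then there exists a minimal triangulation TG of G such that TF is the subgraph of TG induced by F; equivalently, for every clique K of TG, the set K ∩ F is a (possibly empty) clique of TF. -/
/-! Common definitions: chordality, (minimal) triangulations, potential maximal cliques,
minimal separators, tree decompositions and treewidth, minors and minor models,
planarity (via Wagner's characterization), circle and circular-arc graphs, grids. -/

/-- A chord of a closed walk `c` in `G`: an edge of `G` between two vertices of the walk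
that is not an edge of the walk (i.e. joining two nonconsecutive vertices of a cycle). -/
def HasChord {V : Type} (G : SimpleGraph V) {v : V} (c : G.Walk v v) : Prop :=
  ∃ u w : V, u ∈ c.support ∧ w ∈ c.support ∧ G.Adj u w ∧ s(u, w) ∉ c.edges

/-- A graph is chordal if every cycle of length at least four has a chord. -/
def Chordal {V : Type} (G : SimpleGraph V) : Prop :=
  ∀ (v : V) (c : G.Walk v v), c.IsCycle → 4 ≤ c.length → HasChord G c

/-- `H` is a triangulation of `G`: a chordal supergraph of `G` on the same vertex set. -/
def IsTriangulation {V : Type} (G H : SimpleGraph V) : Prop :=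
  G ≤ H ∧ Chordal H

/-- `H` is a minimal triangulation of `G`: no proper subgraph of `H` containing `G`
is chordal. -/
def IsMinimalTriangulation {V : Type} (G H : SimpleGraph V) : Prop :=
  IsTriangulation G H ∧ ∀ H' : SimpleGraph V, G ≤ H' → H' < H → ¬ Chordal H'

/-- A maximal clique: a clique contained in no strictly larger clique. -/
def IsMaxClique {V : Type} (G : SimpleGraph V) (S : Set V) : Prop :=
  G.IsClique S ∧ ∀ T : Set V, G.IsClique T → S ⊆ T → T = S

/-- A potential maximal clique of `G`: a maximal clique of some minimal triangulation of `G`. -/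
def IsPotentialMaximalClique {V : Type} (G : SimpleGraph V) (Ω : Set V) : Prop :=
  ∃ H : SimpleGraph V, IsMinimalTriangulation G H ∧ IsMaxClique H Ω

/-- `S` is a `u,v`-separator: `u, v ∉ S` and every walk from `u` to `v` meets `S`
(equivalently, `u` and `v` lie in different components of `G − S`). -/
def IsSeparator {V : Type} (G : SimpleGraph V) (u v : V) (S : Set V) : Prop :=
  u ∉ S ∧ v ∉ S ∧ ∀ p : G.Walk u v, ∃ x ∈ p.support, x ∈ S

/-- A minimal separator of `G`: a minimal `u,v`-separator for some nonadjacent pair `u ≠ v`. -/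
def IsMinimalSeparator {V : Type} (G : SimpleGraph V) (S : Set V) : Prop :=
  ∃ u v : V, u ≠ v ∧ ¬ G.Adj u v ∧ IsSeparator G u v S ∧
    ∀ S' : Set V, S' ⊂ S → ¬ IsSeparator G u v S'

/-- `(T, bag)` is a tree decomposition of `G`. -/
def IsTreeDecomposition {V ι : Type} (G : SimpleGraph V) (T : SimpleGraph ι)
    (bag : ι → Set V) : Prop :=
  T.IsTree ∧
  (∀ v : V, ∃ i, v ∈ bag i) ∧
  (∀ u v : V, G.Adj u v → ∃ i, u ∈ bag i ∧ v ∈ bag i) ∧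
  (∀ v : V, (T.induce {i | v ∈ bag i}).Connected)

/-- `G` has a tree decomposition of width at most `k`. -/
def HasTreeDecompOfWidth {V : Type} (G : SimpleGraph V) (k : ℕ) : Prop :=
  ∃ (ι : Type) (T : SimpleGraph ι) (bag : ι → Set V),
    IsTreeDecomposition G T bag ∧ ∀ i, (bag i).ncard ≤ k + 1

/-- The treewidth of `G`: the least width of a tree decomposition of `G`. -/
noncomputable def treewidth {V : Type} (G : SimpleGraph V) : ℕ :=
  sInf {k | HasTreeDecompOfWidth G k}

/-- `H` is a minor of `G` (branch-set formulation: nonempty pairwise disjoint connected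
branch sets, with an edge of `G` between branch sets of adjacent vertices of `H`). -/
def IsMinorOf {W V : Type} (H : SimpleGraph W) (G : SimpleGraph V) : Prop :=
  ∃ B : W → Set V,
    (∀ w, (B w).Nonempty) ∧
    (∀ w, (G.induce (B w)).Connected) ∧
    (∀ w₁ w₂ : W, w₁ ≠ w₂ → Disjoint (B w₁) (B w₂)) ∧
    (∀ w₁ w₂ : W, H.Adj w₁ w₂ → ∃ u ∈ B w₁, ∃ v ∈ B w₂, G.Adj u v)

/-- `M` is the vertex set of a minor model of `H` in `G`. -/
def IsMinorModel {W V : Type} (H : SimpleGraph W) (G : SimpleGraph V) (M : Set V) : Prop :=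
  ∃ B : W → Set V,
    (∀ w, (B w).Nonempty) ∧
    (∀ w, (G.induce (B w)).Connected) ∧
    (∀ w₁ w₂ : W, w₁ ≠ w₂ → Disjoint (B w₁) (B w₂)) ∧
    (∀ w₁ w₂ : W, H.Adj w₁ w₂ → ∃ u ∈ B w₁, ∃ v ∈ B w₂, G.Adj u v) ∧
    M = ⋃ w, B w

/-- Planarity, via Wagner's characterization: a finite simple graph is planar iff it has
neither `K₅` nor `K₃,₃` as a minor. -/
def IsPlanar {W : Type} (G : SimpleGraph W) : Prop :=
  ¬ IsMinorOf (SimpleGraph.completeGraph (Fin 5)) G ∧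
  ¬ IsMinorOf (completeBipartiteGraph (Fin 3) (Fin 3)) G

/-- A circle graph: an intersection graph of chords of the unit circle. -/
def IsCircleGraph {V : Type} (G : SimpleGraph V) : Prop :=
  ∃ a b : V → EuclideanSpace ℝ (Fin 2),
    (∀ v, a v ∈ Metric.sphere (0 : EuclideanSpace ℝ (Fin 2)) 1) ∧
    (∀ v, b v ∈ Metric.sphere (0 : EuclideanSpace ℝ (Fin 2)) 1) ∧
    (∀ v, a v ≠ b v) ∧
    ∀ v w : V, v ≠ w →
      (G.Adj v w ↔ (segment ℝ (a v) (b v) ∩ segment ℝ (a w) (b w)).Nonempty)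

/-- A circular-arc graph: an intersection graph of arcs of the unit circle, an arc being
the image of an interval `[s, t]` under the circle parametrization `θ ↦ e^{iθ}`. -/
def IsCircularArcGraph {V : Type} (G : SimpleGraph V) : Prop :=
  ∃ s t : V → ℝ,
    (∀ v, s v ≤ t v) ∧
    ∀ v w : V, v ≠ w →
      (G.Adj v w ↔
        (circleMap 0 1 '' Set.Icc (s v) (t v) ∩
          circleMap 0 1 '' Set.Icc (s w) (t w)).Nonempty)

/-- A weakly chordal graph: neither the graph nor its complement contains an induced cycle
of length at least five, i.e. every such cycle has a chord. -/
def WeaklyChordal {V : Type} (G : SimpleGraph V) : Prop :=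
  (∀ (v : V) (c : G.Walk v v), c.IsCycle → 5 ≤ c.length → HasChord G c) ∧
  (∀ (v : V) (c : Gᶜ.Walk v v), c.IsCycle → 5 ≤ c.length → HasChord Gᶜ c)

/-- The clique number of `G`: the maximum size of a clique. -/
noncomputable def cliqueNumber {V : Type} (G : SimpleGraph V) : ℕ :=
  sSup {n | ∃ S : Set V, G.IsClique S ∧ S.ncard = n}

/-- `C` is a connected component of the graph `G − Ω`. -/
def IsConnCompAvoiding {V : Type} (G : SimpleGraph V) (Ω C : Set V) : Prop :=
  C.Nonempty ∧ C ⊆ Ωᶜ ∧ (G.induce C).Connected ∧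
  ∀ u v : V, u ∈ C → v ∈ Ωᶜ → G.Adj u v → v ∈ C

/-- The `k × k` grid graph. -/
def gridGraph (k : ℕ) : SimpleGraph (Fin k × Fin k) :=
  SimpleGraph.fromRel fun p q =>
    (p.1 = q.1 ∧ p.2.val + 1 = q.2.val) ∨ (p.2 = q.2 ∧ p.1.val + 1 = q.1.val)

/-! Extend `TF` to a triangulation of `G` by making every vertex outside `F` universal; among
the triangulations of `G` that induce `TF` on `F`, an inclusion-minimal one is a minimal
triangulation. Indeed, a chordal `H' < TG` containing `G` induces on `F` a chordal graph
between `G[F]` and `TF`, which by minimality of `TF` is `TF` itself, contradicting the choice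
of `TG`. Chordality of the extension: a long cycle through a universal vertex `x` has a chord at
`x`, and a cycle inside `F` is a cycle of `TF`. -/

open SimpleGraph

variable {V W : Type}

theorem hasChord_map_iff {G : SimpleGraph V} {H : SimpleGraph W} (f : G ↪g H) {v : V}
    (c : G.Walk v v) : HasChord H (c.map f.toHom) ↔ HasChord G c := by
  constructor
  · rintro ⟨u, w, hu, hw, hadj, hne⟩
    rw [Walk.support_map, List.mem_map] at hu hw
    obtain ⟨u, hu, rfl⟩ := hu
    obtain ⟨w, hw, rfl⟩ := hw
    refine ⟨u, w, hu, hw, f.map_adj_iff.1 hadj, fun hmem => hne ?_⟩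
    rw [Walk.edges_map]
    exact List.mem_map_of_mem hmem
  · rintro ⟨u, w, hu, hw, hadj, hne⟩
    refine ⟨f u, f w, ?_, ?_, f.map_adj_iff.2 hadj, fun hmem => hne ?_⟩
    · rw [Walk.support_map]; exact List.mem_map_of_mem hu
    · rw [Walk.support_map]; exact List.mem_map_of_mem hw
    rw [Walk.edges_map, List.mem_map] at hmem
    obtain ⟨e, he, hfe⟩ := hmem
    rwa [← Sym2.map.injective f.injective (hfe.trans (Sym2.map_mk _ _ _).symm)]

theorem Chordal.comap {G : SimpleGraph V} {H : SimpleGraph W} (hH : Chordal H) (f : G ↪g H) :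
    Chordal G := fun _ c hc hlen =>
  (hasChord_map_iff f c).1 <|
    hH _ _ (hc.map f.injective) (by rwa [Walk.length_map])

theorem Chordal.hasChord_of_support_subset {H : SimpleGraph V} {F : Set V}
    (hF : Chordal (H.induce F)) {v : V} (c : H.Walk v v) (hc : c.IsCycle)
    (hlen : 4 ≤ c.length) (hs : ∀ x ∈ c.support, x ∈ F) : HasChord H c := by
  have hlift := Walk.map_induce c hs
  have hchord := (hasChord_map_iff (Embedding.induce F) (c.induce F hs)).2 <|
    hF _ _ (Walk.IsCycle.of_map (f := (Embedding.induce F).toHom) (by rwa [hlift]))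
      (by rwa [← Walk.length_map (Embedding.induce F).toHom, hlift])
  rwa [hlift] at hchord

theorem SimpleGraph.Walk.IsCycle.exists_ne_start_notMem_edges {G : SimpleGraph V} {v : V}
    {c : G.Walk v v} (hc : c.IsCycle) (hlen : 4 ≤ c.length) :
    ∃ w ∈ c.support, w ≠ v ∧ s(v, w) ∉ c.edges := by
  -- the only cycle edges at `v` go to the vertices at positions `1` and `length - 1`
  refine ⟨c.getVert 2, c.getVert_mem_support 2, ?_, ?_⟩
  · rw [Ne, hc.getVert_endpoint_iff (by omega)]
    omega
  · rw [Walk.mk_mem_edges_iff_exists]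
    rintro ⟨i, hi, hedge⟩
    have hinj := hc.getVert_injOn
    rcases Sym2.eq_iff.1 hedge with ⟨hstart, h2⟩ | ⟨h2, hend⟩
    · have hi0 : i = 0 := by
        rcases (hc.getVert_endpoint_iff (by omega)).1 hstart with h | h <;> omega
      have := hinj ⟨by omega, by omega⟩ ⟨by omega, by omega⟩ h2
      omega
    · have hlast : i + 1 = c.length := by
        rcases (hc.getVert_endpoint_iff (by omega)).1 hend with h | h <;> omega
      have := hinj ⟨by omega, by omega⟩ ⟨by omega, by omega⟩ h2
      omega

theorem SimpleGraph.Walk.IsCycle.exists_ne_notMem_edges {G : SimpleGraph V} {v x : V}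
    {c : G.Walk v v} (hc : c.IsCycle) (hlen : 4 ≤ c.length) (hx : x ∈ c.support) :
    ∃ w ∈ c.support, w ≠ x ∧ s(x, w) ∉ c.edges := by
  classical
  obtain ⟨w, hw, hwx, hne⟩ :=
    (hc.rotate hx).exists_ne_start_notMem_edges (by rwa [Walk.length_rotate])
  exact ⟨w, (c.mem_support_rotate_iff x hx).1 hw, hwx,
    fun hmem => hne ((c.rotate_edges x hx).perm.mem_iff.2 hmem)⟩

def extendUniversal (F : Set V) (TF : SimpleGraph F) : SimpleGraph V :=
  TF.map (Function.Embedding.subtype F) ⊔ fromRel fun a _ => a ∉ F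

theorem induce_extendUniversal (F : Set V) (TF : SimpleGraph F) :
    (extendUniversal F TF).induce F = TF := by
  ext a b
  simp only [extendUniversal, comap_adj, sup_adj, map_adj, fromRel_adj,
    Function.Embedding.subtype_apply, Subtype.coe_prop, not_true_eq_false, or_self, and_false,
    or_false]
  refine ⟨fun ⟨u, v, h, hu, hv⟩ => ?_, fun h => ⟨a, b, h, rfl, rfl⟩⟩
  rwa [← Subtype.ext hu, ← Subtype.ext hv]

theorem le_extendUniversal {G : SimpleGraph V} {F : Set V} {TF : SimpleGraph F}
    (h : G.induce F ≤ TF) : G ≤ extendUniversal F TF := by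
  intro a b hab
  rw [extendUniversal, sup_adj, map_adj, fromRel_adj]
  by_cases hF : a ∈ F ∧ b ∈ F
  · have hF' : (G.induce F).Adj ⟨a, hF.1⟩ ⟨b, hF.2⟩ := hab
    exact Or.inl ⟨_, _, h hF', rfl, rfl⟩
  · refine Or.inr ⟨hab.ne, ?_⟩
    tauto

theorem Chordal.extendUniversal {F : Set V} {TF : SimpleGraph F} (hTF : Chordal TF) :
    Chordal (extendUniversal F TF) := by
  intro v c hc hlen
  by_cases hs : ∀ x ∈ c.support, x ∈ F
  · exact Chordal.hasChord_of_support_subset (by rwa [induce_extendUniversal]) c hc hlen hs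
  push Not at hs
  obtain ⟨x, hx, hxF⟩ := hs
  obtain ⟨w, hw, hwx, hne⟩ := hc.exists_ne_notMem_edges hlen hx
  exact ⟨x, w, hx, hw, Or.inr ⟨hwx.symm, Or.inl hxF⟩, hne⟩

theorem isMinimalTriangulation_of_minimal {G : SimpleGraph V} {F : Set V} {TF : SimpleGraph F}
    (hTF : IsMinimalTriangulation (G.induce F) TF) {TG : SimpleGraph V}
    (hTG : Minimal (fun H => IsTriangulation G H ∧ H.induce F = TF) TG) :
    IsMinimalTriangulation G TG := by
  refine ⟨hTG.1.1, fun H hGH hlt hH => hlt.not_ge (hTG.2 ⟨⟨hGH, hH⟩, ?_⟩ hlt.le)⟩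
  have hle : H.induce F ≤ TF := hTG.1.2 ▸ comap_monotone _ hlt.le
  by_contra hne
  exact hTF.2 _ (comap_monotone _ hGH) (lt_of_le_of_ne hle hne) (hH.comap (Embedding.induce F))

/-- Fomin–Villanger: every minimal triangulation `TF` of an induced subgraph `G[F]` extends
to a minimal triangulation `TG` of `G` inducing `TF` on `F`; equivalently, every clique of
`TG` intersects `F` in a clique of `TF`. -/
theorem stmt_0 {V : Type} [Fintype V] (G : SimpleGraph V) (F : Set V)
    (TF : SimpleGraph F) (hTF : IsMinimalTriangulation (G.induce F) TF) :
    ∃ TG : SimpleGraph V, IsMinimalTriangulation G TG ∧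
      TG.induce F = TF ∧
      ∀ K : Set V, TG.IsClique K → TF.IsClique {x : F | (x : V) ∈ K} := by
  have hext : IsTriangulation G (extendUniversal F TF) ∧ (extendUniversal F TF).induce F = TF :=
    ⟨⟨le_extendUniversal hTF.1.1, hTF.1.2.extendUniversal⟩, induce_extendUniversal F TF⟩
  obtain ⟨TG, hTG⟩ := exists_minimal_of_wellFoundedLT
    (fun H => IsTriangulation G H ∧ H.induce F = TF) ⟨_, hext⟩
  refine ⟨TG, isMinimalTriangulation_of_minimal hTF hTG, hTG.1.2, fun K hK => ?_⟩
  rw [← hTG.1.2, isClique_induce_iff]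
  exact hK.subset (Set.image_subset_iff.2 fun _ hx => hx)
end

section
/- Every circular-arc graph whose maximum vertex degree is at most D has treewidth at most 2D. -/
/-! If some point of the circle lies on at most `D` arcs, cut the circle there. The arcs avoiding
the cut point become intervals of a line, and sweeping along the line gives a path decomposition
whose bags are the at most `D` arcs through the cut point together with the intervals through one
point of the line. The arcs through any point pairwise intersect, so they form a clique, which has
at most `D + 1` vertices; hence every bag has at most `2D + 1` vertices.

Otherwise every point lies on more than `D` arcs. For adjacent `u` and `v`, the arcs through a
common point then form a clique of `D + 1` vertices inside both closed neighbourhoods, so the two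
closed neighbourhoods coincide: `G` is a disjoint union of cliques of size at most `D + 1`, and
has treewidth at most `D`. -/

open Set Real SimpleGraph

namespace SimpleGraph

lemma pathGraph_mem_edges_of_val_add_one_eq {n : ℕ} {u v : Fin n} (huv : (u : ℕ) + 1 = v)
    (p : (pathGraph n).Walk u v) : s(u, v) ∈ p.edges := by
  obtain ⟨d, hd, hdu, hdv⟩ :=
    p.exists_boundary_dart {j | (j : ℕ) ≤ u} (by simp) (by simp only [mem_ofPred_eq]; omega)
  simp only [mem_ofPred_eq, not_le] at hdu hdv
  have hadj := pathGraph_adj.mp d.adj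
  have hd_eq : d.toProd = (u, v) := Prod.ext (Fin.ext (by simp; omega)) (Fin.ext (by simp; omega))
  rw [Walk.edges_eq_map_darts]
  exact List.mem_map.mpr ⟨d, hd, by rw [Dart.edge, hd_eq]⟩

lemma pathGraph_isAcyclic (n : ℕ) : (pathGraph n).IsAcyclic := by
  refine isAcyclic_iff_forall_adj_isBridge.mpr fun u v huv => ?_
  rcases pathGraph_adj.mp huv with h | h
  · exact isBridge_iff_forall_walk_mem_edges.mpr (pathGraph_mem_edges_of_val_add_one_eq h)
  · rw [Sym2.eq_swap]
    exact isBridge_iff_forall_walk_mem_edges.mpr (pathGraph_mem_edges_of_val_add_one_eq h)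

lemma pathGraph_isTree (n : ℕ) [NeZero n] : (pathGraph n).IsTree := by
  obtain ⟨m, rfl⟩ := Nat.exists_eq_succ_of_ne_zero (NeZero.ne n)
  exact ⟨pathGraph_connected m, pathGraph_isAcyclic _⟩

lemma pathGraph_induce_connected {n : ℕ} {S : Set (Fin n)} (hne : S.Nonempty)
    (hS : S.OrdConnected) : ((pathGraph n).induce S).Connected := by
  have reach : ∀ (k : ℕ) (a b : Fin n) (ha : a ∈ S) (hb : b ∈ S), (b : ℕ) = a + k →
      ((pathGraph n).induce S).Reachable ⟨a, ha⟩ ⟨b, hb⟩ := by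
    intro k
    induction k with
    | zero =>
      intro a b ha hb hab
      obtain rfl : a = b := Fin.ext hab.symm
      rfl
    | succ k ih =>
      intro a b ha hb hab
      let c : Fin n := ⟨a + k, by omega⟩
      have hc : c ∈ S :=
        hS.out ha hb ⟨Fin.le_def.mpr (by simp [c]), Fin.le_def.mpr (by simp [c]; omega)⟩
      refine (ih a c ha hc rfl).trans (Adj.reachable ?_)
      simp only [comap_adj, Function.Embedding.coe_subtype, pathGraph_adj, c]
      omega
  refine (connected_iff _).mpr ⟨fun ⟨a, ha⟩ ⟨b, hb⟩ => ?_, hne.to_subtype⟩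
  rcases le_total a b with h | h
  · exact reach (b - a : ℕ) a b ha hb (by rw [Fin.le_def] at h; omega)
  · exact (reach (a - b : ℕ) b a hb ha (by rw [Fin.le_def] at h; omega)).symm

def closedNeighborSet {V : Type} (G : SimpleGraph V) (v : V) : Set V :=
  insert v (G.neighborSet v)

lemma self_mem_closedNeighborSet {V : Type} (G : SimpleGraph V) (v : V) :
    v ∈ G.closedNeighborSet v :=
  Set.mem_insert _ _

lemma ncard_closedNeighborSet_le {V : Type} {G : SimpleGraph V} {v : V} {D : ℕ}
    (hD : (G.neighborSet v).ncard ≤ D) : (G.closedNeighborSet v).ncard ≤ D + 1 :=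
  (ncard_insert_le _ _).trans (by omega)

lemma IsClique.subset_closedNeighborSet {V : Type} {G : SimpleGraph V} {S : Set V}
    (hS : G.IsClique S) {w : V} (hw : w ∈ S) : S ⊆ G.closedNeighborSet w := by
  intro v hv
  rcases eq_or_ne w v with rfl | hne
  · exact G.self_mem_closedNeighborSet w
  · exact Or.inr (hS hw hv hne)

end SimpleGraph

section TreeDecomposition

variable {V : Type} (G : SimpleGraph V)

lemma isTreeDecomposition_pathGraph {n : ℕ} [NeZero n] (bag : Fin n → Set V)
    (hcover : ∀ v, ∃ i, v ∈ bag i) (hedge : ∀ u v, G.Adj u v → ∃ i, u ∈ bag i ∧ v ∈ bag i)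
    (hconv : ∀ v, {i | v ∈ bag i}.OrdConnected) : IsTreeDecomposition G (pathGraph n) bag :=
  ⟨pathGraph_isTree n, hcover, hedge, fun v => pathGraph_induce_connected (hcover v) (hconv v)⟩

lemma hasTreeDecompOfWidth_of_isEmpty [IsEmpty V] (k : ℕ) : HasTreeDecompOfWidth G k :=
  ⟨Fin 1, pathGraph 1, fun _ => ∅,
    isTreeDecomposition_pathGraph G _ isEmptyElim (fun u => isEmptyElim u) (fun v => isEmptyElim v),
    fun _ => by simp⟩

variable {G} in
lemma HasTreeDecompOfWidth.mono {k l : ℕ} (h : HasTreeDecompOfWidth G k) (hkl : k ≤ l) :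
    HasTreeDecompOfWidth G l := by
  obtain ⟨ι, T, bag, hT, hsize⟩ := h
  exact ⟨ι, T, bag, hT, fun i => (hsize i).trans (by omega)⟩

/-- Sorting the vertices by `key` lays the bags `B v` out along a path. -/
lemma hasTreeDecompOfWidth_of_bags [Fintype V] {α : Type*} [LinearOrder α] (k : ℕ)
    (B : V → Set V) (key : V → α) (hmem : ∀ v, v ∈ B v)
    (hedge : ∀ u v, G.Adj u v → ∃ w, u ∈ B w ∧ v ∈ B w)
    (hconv : ∀ v u₁ u₂ u₃, key u₁ ≤ key u₂ → key u₂ ≤ key u₃ → v ∈ B u₁ → v ∈ B u₃ → v ∈ B u₂)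
    (hsize : ∀ w, (B w).ncard ≤ k + 1) : HasTreeDecompOfWidth G k := by
  cases isEmpty_or_nonempty V
  · exact hasTreeDecompOfWidth_of_isEmpty G k
  have : NeZero (Fintype.card V) := ⟨Fintype.card_ne_zero⟩
  let e₀ := (Fintype.equivFin V).symm
  let e : Fin (Fintype.card V) ≃ V := (Tuple.sort (key ∘ e₀)).trans e₀
  have hmono : Monotone (key ∘ e) := Tuple.monotone_sort (key ∘ e₀)
  refine ⟨_, pathGraph _, B ∘ e, isTreeDecomposition_pathGraph G _
    (fun v => ⟨e.symm v, by simpa using hmem v⟩) (fun u v huv => ?_)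
    (fun v => ⟨fun i hi j hj l hl => hconv v _ _ _ (hmono hl.1) (hmono hl.2) hi hj⟩),
    fun _ => hsize _⟩
  obtain ⟨w, hu, hv⟩ := hedge u v huv
  exact ⟨e.symm w, by simpa using hu, by simpa using hv⟩

/-- Each bag consists of `A` and the vertices whose intervals contain one given point. -/
lemma hasTreeDecompOfWidth_of_intervals [Fintype V] {α : Type*} [LinearOrder α] (A : Set V)
    (L R : V → α) (hLR : ∀ v ∉ A, L v ≤ R v)
    (hadj : ∀ u v, u ∉ A → v ∉ A → G.Adj u v → (Icc (L u) (R u) ∩ Icc (L v) (R v)).Nonempty)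
    {m k : ℕ} (hm : ∀ c, {v | v ∉ A ∧ c ∈ Icc (L v) (R v)}.ncard ≤ m)
    (hk : A.ncard + m ≤ k + 1) : HasTreeDecompOfWidth G k := by
  set B : V → Set V := fun w => A ∪ {v | v ∉ A ∧ L w ∈ Icc (L v) (R v)}
  have hmem : ∀ w, w ∈ B w := fun w => by
    by_cases hw : w ∈ A
    · exact Or.inl hw
    · exact Or.inr ⟨hw, le_rfl, hLR w hw⟩
  refine hasTreeDecompOfWidth_of_bags G k B L hmem (fun u v huv => ?_) ?_ (fun w => ?_)
  · by_cases hu : u ∈ A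
    · exact ⟨v, Or.inl hu, hmem v⟩
    by_cases hv : v ∈ A
    · exact ⟨u, hmem u, Or.inl hv⟩
    obtain ⟨c, ⟨hcu, hcu'⟩, hcv, hcv'⟩ := hadj u v hu hv huv
    rcases le_total (L u) (L v) with h | h
    · exact ⟨v, Or.inr ⟨hu, h, hcv.trans hcu'⟩, hmem v⟩
    · exact ⟨u, hmem u, Or.inr ⟨hv, h, hcu.trans hcv'⟩⟩
  · rintro v u₁ u₂ u₃ h₁₂ h₂₃ (hv | ⟨hv, hv₁, -⟩) (hv' | ⟨-, -, hv₃⟩)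
    · exact Or.inl hv
    · exact Or.inl hv
    · exact Or.inl hv'
    · exact Or.inr ⟨hv, hv₁.trans h₁₂, h₂₃.trans hv₃⟩
  · calc (B w).ncard ≤ A.ncard + {v | v ∉ A ∧ L w ∈ Icc (L v) (R v)}.ncard := ncard_union_le _ _
      _ ≤ k + 1 := by have := hm (L w); omega

lemma hasTreeDecompOfWidth_of_closedNeighborSet_eq [Fintype V] {D : ℕ}
    (hD : ∀ v, (G.neighborSet v).ncard ≤ D)
    (hG : ∀ u v, G.Adj u v → G.closedNeighborSet u = G.closedNeighborSet v) :
    HasTreeDecompOfWidth G D := by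
  have hN : ∀ u v, v ∈ G.closedNeighborSet u → G.closedNeighborSet v = G.closedNeighborSet u := by
    rintro u v (rfl | huv)
    exacts [rfl, (hG u v huv).symm]
  -- each closed neighbourhood is labelled by a chosen element of it
  let rep : V → V := fun v => @Classical.epsilon _ ⟨v⟩ (· ∈ G.closedNeighborSet v)
  have hrep : ∀ v, rep v ∈ G.closedNeighborSet v :=
    fun v => Classical.epsilon_spec ⟨v, G.self_mem_closedNeighborSet v⟩
  let key : V → Fin (Fintype.card V) := fun v => Fintype.equivFin V (rep v)
  refine hasTreeDecompOfWidth_of_intervals G ∅ key key (fun _ _ => le_rfl) ?_ (m := D + 1) ?_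
    (by simp)
  · intro u v _ _ huv
    have hkey : key u = key v := by simp only [key, rep, hG u v huv]
    exact ⟨key u, ⟨le_rfl, le_rfl⟩, hkey ▸ ⟨le_rfl, le_rfl⟩⟩
  · intro c
    simp only [mem_empty_iff_false, not_false_eq_true, true_and, Icc_self, mem_singleton_iff]
    rcases {v | c = key v}.eq_empty_or_nonempty with h | ⟨w, hw⟩
    · simp [h]
    refine (ncard_le_ncard fun v (hv : c = key v) => ?_).trans (ncard_closedNeighborSet_le (hD w))
    have hrep_eq : rep v = rep w := (Fintype.equivFin V).injective (hv.symm.trans hw)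
    rw [← hN w (rep w) (hrep w), ← hrep_eq, hN v (rep v) (hrep v)]
    exact G.self_mem_closedNeighborSet v

end TreeDecomposition

lemma circleMap_image_Icc_toIcoMod (c : ℂ) (R x a b : ℝ) :
    circleMap c R '' Icc (toIcoMod two_pi_pos x a) (toIcoMod two_pi_pos x a + (b - a)) =
      circleMap c R '' Icc a b := by
  rw [← self_sub_toIcoDiv_zsmul, show ∀ y : ℝ, a - y + (b - a) = b - y by intro; ring,
    ← image_sub_const_Icc, image_image]
  simp only [(periodic_circleMap c R).sub_zsmul_eq]

/-- An arc avoiding the point `circleMap c R x`, unrolled into the period starting at `x`. -/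
lemma Icc_toIcoMod_subset_Ioo {c : ℂ} {R x a b : ℝ} (hab : a ≤ b)
    (hx : circleMap c R x ∉ circleMap c R '' Icc a b) :
    Icc (toIcoMod two_pi_pos x a) (toIcoMod two_pi_pos x a + (b - a)) ⊆ Ioo x (x + 2 * π) := by
  rw [← circleMap_image_Icc_toIcoMod c R x] at hx
  obtain ⟨hxL, hLx⟩ := toIcoMod_mem_Ico two_pi_pos x a
  refine Icc_subset_Ioo (hxL.lt_of_ne fun hL => hx ⟨x, ⟨hL.ge, by linarith⟩, rfl⟩)
    (lt_of_not_ge fun h => hx ⟨x + 2 * π, ⟨hLx.le, h⟩, periodic_circleMap c R x⟩)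

section CircularArc

variable {V : Type} {G : SimpleGraph V} {s t : V → ℝ} {D : ℕ}

def IsArcModel (G : SimpleGraph V) (s t : V → ℝ) : Prop :=
  ∀ v w : V, v ≠ w →
    (G.Adj v w ↔
      (circleMap 0 1 '' Icc (s v) (t v) ∩ circleMap 0 1 '' Icc (s w) (t w)).Nonempty)

def arcsThrough (s t : V → ℝ) (z : ℂ) : Set V :=
  {v | z ∈ circleMap 0 1 '' Icc (s v) (t v)}

lemma IsArcModel.isClique_arcsThrough (h : IsArcModel G s t) (z : ℂ) :
    G.IsClique (arcsThrough s t z) :=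
  fun u hu v hv huv => (h u v huv).2 ⟨z, hu, hv⟩

lemma IsArcModel.ncard_arcsThrough_le [Finite V] (h : IsArcModel G s t)
    (hD : ∀ v, (G.neighborSet v).ncard ≤ D) (z : ℂ) : (arcsThrough s t z).ncard ≤ D + 1 := by
  rcases (arcsThrough s t z).eq_empty_or_nonempty with h₀ | ⟨w, hw⟩
  · simp [h₀]
  exact (ncard_le_ncard ((h.isClique_arcsThrough z).subset_closedNeighborSet hw)).trans
    (ncard_closedNeighborSet_le (hD w))

lemma IsArcModel.hasTreeDecompOfWidth_of_ncard_arcsThrough_le [Fintype V]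
    (h : IsArcModel G s t) (hst : ∀ v, s v ≤ t v) (hD : ∀ v, (G.neighborSet v).ncard ≤ D)
    {x : ℝ} (hx : (arcsThrough s t (circleMap 0 1 x)).ncard ≤ D) :
    HasTreeDecompOfWidth G (2 * D) := by
  set A := arcsThrough s t (circleMap 0 1 x)
  set L : V → ℝ := fun v => toIcoMod two_pi_pos x (s v)
  set R : V → ℝ := fun v => L v + (t v - s v)
  have harc : ∀ v, circleMap 0 1 '' Icc (L v) (R v) = circleMap 0 1 '' Icc (s v) (t v) :=
    fun v => circleMap_image_Icc_toIcoMod 0 1 x (s v) (t v)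
  have hcut : ∀ v ∉ A, Icc (L v) (R v) ⊆ Ioo x (x + 2 * π) :=
    fun v hv => Icc_toIcoMod_subset_Ioo (hst v) hv
  refine hasTreeDecompOfWidth_of_intervals G A L R (fun v _ => by simp only [R]; linarith [hst v])
    (fun u v hu hv huv => ?_) (m := D + 1) (fun c => ?_) (by omega)
  · obtain ⟨z, hzu, hzv⟩ := (h u v huv.ne).1 huv
    rw [← harc] at hzu hzv
    obtain ⟨θ, hθu, rfl⟩ := hzu
    obtain ⟨θ', hθ'v, hθ'⟩ := hzv
    have hθθ' : θ' = θ := injOn_circleMap_of_abs_sub_le' one_ne_zero (by linarith)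
      (Ioo_subset_Ico_self (hcut v hv hθ'v)) (Ioo_subset_Ico_self (hcut u hu hθu)) hθ'
    exact ⟨θ, hθu, hθθ' ▸ hθ'v⟩
  · refine (ncard_le_ncard fun v hv => ?_).trans (h.ncard_arcsThrough_le hD (circleMap 0 1 c))
    exact (harc v).subset ⟨c, hv.2, rfl⟩

lemma IsArcModel.closedNeighborSet_eq_of_adj [Finite V] (h : IsArcModel G s t)
    (hD : ∀ v, (G.neighborSet v).ncard ≤ D)
    (hdense : ∀ x : ℝ, D < (arcsThrough s t (circleMap 0 1 x)).ncard) {u v : V}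
    (huv : G.Adj u v) : G.closedNeighborSet u = G.closedNeighborSet v := by
  obtain ⟨z, hzu, hzv⟩ := (h u v huv.ne).1 huv
  have hz : D < (arcsThrough s t z).ncard := by
    obtain ⟨θ, -, rfl⟩ := hzu
    exact hdense θ
  have hN : ∀ w ∈ arcsThrough s t z, arcsThrough s t z = G.closedNeighborSet w :=
    fun w hw => eq_of_subset_of_ncard_le ((h.isClique_arcsThrough z).subset_closedNeighborSet hw)
      ((ncard_closedNeighborSet_le (hD w)).trans hz)
  rw [← hN u hzu, hN v hzv]

end CircularArc

/-- Every circular-arc graph of maximum degree at most `D` has treewidth at most `2D`. -/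
theorem stmt_8 {V : Type} [Fintype V] (G : SimpleGraph V) (D : ℕ)
    (hG : IsCircularArcGraph G) (hD : ∀ v : V, (G.neighborSet v).ncard ≤ D) :
    treewidth G ≤ 2 * D := by
  obtain ⟨s, t, hst, hmodel⟩ := hG
  replace hmodel : IsArcModel G s t := hmodel
  apply Nat.sInf_le
  by_cases hsparse : ∃ x : ℝ, (arcsThrough s t (circleMap 0 1 x)).ncard ≤ D
  · obtain ⟨x, hx⟩ := hsparse
    exact hmodel.hasTreeDecompOfWidth_of_ncard_arcsThrough_le hst hD hx
  · simp only [not_exists, not_le] at hsparse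
    exact (hasTreeDecompOfWidth_of_closedNeighborSet_eq G hD
      fun u v => hmodel.closedNeighborSet_eq_of_adj hD hsparse).mono (by omega)
end

section
/- Every chordal graph G has a tree decomposition whose bags are exactly the maximal cliques of G (a clique tree of G). -/
/-!
A minimal separator `S` of a chordal graph is a clique: two nonadjacent vertices `x, y ∈ S` would
be joined by chordless paths through the components of `a` and of `b` in `G - S`, and the two
paths close up to a cycle of length at least four whose only possible chords would join the two
components. By induction on the number of vertices this gives Dirac's lemma: a chordal graph that
is not complete has two nonadjacent simplicial vertices (a simplicial vertex of `G[A ∪ S]` in the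
component `A` is simplicial in `G`, and the clique `S` contains at most one of a nonadjacent pair).

Clique trees of `G[W]` are then built by induction on `W`. Adding a vertex `v` whose neighbourhood
`N` in `W` is a clique, the maximal cliques become `N ∪ {v}` together with the old ones other than
`N`. If `N` was a bag it is replaced by `N ∪ {v}`; otherwise `N ∪ {v}` is attached as a new leaf to
a bag containing `N`. Either way the bags containing a given vertex still form a subtree.
-/

namespace SimpleGraph

variable {V V' : Type} {G : SimpleGraph V} {G' : SimpleGraph V'}

namespace Walk

theorem IsChordless.map {u v : V} {p : G.Walk u v} (f : G ↪g G') (hp : p.IsChordless) :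
    (p.map f.toHom).IsChordless := by
  rw [isChordless_iff_forall_mem_edges] at hp ⊢
  intro x y hx hy hxy
  rw [support_map, List.mem_map] at hx hy
  obtain ⟨x, hx, rfl⟩ := hx
  obtain ⟨y, hy, rfl⟩ := hy
  rw [edges_map]
  exact List.mem_map_of_mem (f := Sym2.map f) (hp hx hy (f.map_adj_iff.mp hxy))

theorem isChordless_of_length_eq_dist {u v : V} (p : G.Walk u v) (hp : p.length = G.dist u v) :
    p.IsChordless := by
  have hdist : ∀ n ≤ p.length, G.dist u (p.getVert n) = n := fun n hn => by
    simpa [take_length, min_eq_left hn] using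
      (length_eq_dist_of_subwalk hp (p.isSubwalk_take n)).symm
  rw [isChordless_iff_forall_mem_edges]
  intro x y hx hy hxy
  obtain ⟨i, rfl, hi⟩ := mem_support_iff_exists_getVert.mp hx
  obtain ⟨j, rfl, hj⟩ := mem_support_iff_exists_getVert.mp hy
  have hji : j ≤ i + 1 := by
    have := hxy.reachable.dist_triangle_right u
    rwa [dist_eq_one_iff_adj.mpr hxy, hdist i hi, hdist j hj] at this
  have hij : i ≤ j + 1 := by
    have := hxy.symm.reachable.dist_triangle_right u
    rwa [dist_eq_one_iff_adj.mpr hxy.symm, hdist i hi, hdist j hj] at this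
  have hne : i ≠ j := by rintro rfl; exact hxy.ne rfl
  rw [mk_mem_edges_iff_exists]
  rcases (by omega : j = i + 1 ∨ i = j + 1) with rfl | rfl
  · exact ⟨i, by omega, rfl⟩
  · exact ⟨j, by omega, Sym2.eq_swap⟩

theorem exists_isPath_isChordless_of_support_subset {u v : V} (p : G.Walk u v) {s : Set V}
    (hs : ∀ z ∈ p.support, z ∈ s) :
    ∃ q : G.Walk u v, q.IsPath ∧ q.IsChordless ∧ ∀ z ∈ q.support, z ∈ s := by
  obtain ⟨q, hq⟩ := (p.induce s hs).reachable.exists_walk_length_eq_dist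
  let f : G.induce s ↪g G := Embedding.induce s
  refine ⟨q.map f.toHom, (q.isPath_of_length_eq_dist hq).map f.injective,
    (q.isChordless_of_length_eq_dist hq).map f, ?_⟩
  intro z hz
  obtain ⟨w, -, rfl⟩ := List.mem_map.mp (support_map f.toHom q ▸ hz)
  exact w.2

end Walk

end SimpleGraph

open SimpleGraph

theorem HasChord.exists_adj_of_isChordless_append {V : Type} {G : SimpleGraph V} {u v : V}
    {p : G.Walk u v} {q : G.Walk v u} (hp : p.IsChordless) (hq : q.IsChordless)
    (h : HasChord G (p.append q)) :
    ∃ x ∈ p.support, ∃ y ∈ q.support, x ∉ q.support ∧ y ∉ p.support ∧ G.Adj x y := by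
  obtain ⟨x, y, hx, hy, hxy, hne⟩ := h
  rw [Walk.mem_support_append_iff] at hx hy
  rw [Walk.edges_append, List.mem_append, not_or] at hne
  by_cases hxp : x ∈ p.support <;> by_cases hyp : y ∈ p.support
  · exact absurd (hp.mem_edges hxp hyp hxy) hne.1
  · have hyq := hy.resolve_left hyp
    by_cases hxq : x ∈ q.support
    · exact absurd (hq.mem_edges hxq hyq hxy) hne.2
    · exact ⟨x, hxp, y, hyq, hxq, hyp, hxy⟩
  · have hxq := hx.resolve_left hxp
    by_cases hyq : y ∈ q.support
    · exact absurd (hq.mem_edges hxq hyq hxy) hne.2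
    · exact ⟨y, hyp, x, hxq, hyq, hxp, hxy.symm⟩
  · exact absurd (hq.mem_edges (hx.resolve_left hxp) (hy.resolve_left hyp) hxy) hne.2

theorem Chordal.comap_s14 {V V' : Type} {G : SimpleGraph V} {G' : SimpleGraph V'} (hG : Chordal G)
    (f : G' ↪g G) : Chordal G' := by
  intro v c hc hlen
  obtain ⟨x, y, hx, hy, hxy, hne⟩ :=
    hG _ (c.map f.toHom) (hc.map f.injective) (by rwa [Walk.length_map])
  rw [Walk.support_map, List.mem_map] at hx hy
  obtain ⟨x, hx, rfl⟩ := hx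
  obtain ⟨y, hy, rfl⟩ := hy
  refine ⟨x, y, hx, hy, f.map_adj_iff.mp hxy, fun h => hne ?_⟩
  rw [Walk.edges_map]
  exact List.mem_map_of_mem (f := Sym2.map f) h

namespace SimpleGraph

variable {V : Type} {G : SimpleGraph V} {S : Set V} {a b x y : V}

/-- The component of `a` in `G - S` (empty if `a ∈ S`). -/
def reachAvoiding (G : SimpleGraph V) (S : Set V) (a : V) : Set V :=
  {x | ∃ p : G.Walk a x, ∀ z ∈ p.support, z ∉ S}

theorem mem_reachAvoiding_self (ha : a ∉ S) : a ∈ G.reachAvoiding S a :=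
  ⟨.nil, by simpa using ha⟩

theorem notMem_of_mem_reachAvoiding (hx : x ∈ G.reachAvoiding S a) : x ∉ S :=
  let ⟨p, hp⟩ := hx
  hp x p.end_mem_support

theorem mem_reachAvoiding_of_adj (hx : x ∈ G.reachAvoiding S a) (hy : y ∉ S) (h : G.Adj x y) :
    y ∈ G.reachAvoiding S a := by
  obtain ⟨p, hp⟩ := hx
  refine ⟨p.concat h, fun z hz => ?_⟩
  rw [Walk.support_concat, List.mem_append, List.mem_singleton] at hz
  rcases hz with hz | rfl
  exacts [hp z hz, hy]

theorem mem_reachAvoiding_of_mem_support {p : G.Walk a x} (hp : ∀ z ∈ p.support, z ∉ S)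
    {z : V} (hz : z ∈ p.support) : z ∈ G.reachAvoiding S a := by
  classical
  exact ⟨p.takeUntil z hz, fun w hw => hp w (p.support_takeUntil_subset_support hz hw)⟩

theorem exists_walk_of_mem_reachAvoiding (hx : x ∈ G.reachAvoiding S a)
    (hy : y ∈ G.reachAvoiding S a) :
    ∃ p : G.Walk x y, ∀ z ∈ p.support, z ∈ G.reachAvoiding S a := by
  obtain ⟨p, hp⟩ := hx
  obtain ⟨q, hq⟩ := hy
  refine ⟨p.reverse.append q, fun z hz => ?_⟩
  rw [Walk.mem_support_append_iff, Walk.support_reverse, List.mem_reverse] at hz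
  rcases hz with hz | hz
  exacts [mem_reachAvoiding_of_mem_support hp hz, mem_reachAvoiding_of_mem_support hq hz]

end SimpleGraph

section Separator

variable {V : Type} {G : SimpleGraph V} {S : Set V} {a b x y : V}

theorem IsSeparator.symm (h : IsSeparator G a b S) : IsSeparator G b a S := by
  refine ⟨h.2.1, h.1, fun p => ?_⟩
  obtain ⟨z, hz, hzS⟩ := h.2.2 p.reverse
  exact ⟨z, by simpa using hz, hzS⟩

theorem minimal_isSeparator_comm :
    Minimal (IsSeparator G a b) S ↔ Minimal (IsSeparator G b a) S :=
  ⟨fun h => ⟨h.1.symm, fun _ hT hle => h.2 hT.symm hle⟩,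
    fun h => ⟨h.1.symm, fun _ hT hle => h.2 hT.symm hle⟩⟩

theorem IsSeparator.notMem_reachAvoiding (h : IsSeparator G a b S) :
    b ∉ G.reachAvoiding S a := fun ⟨p, hp⟩ =>
  let ⟨z, hz, hzS⟩ := h.2.2 p
  hp z hz hzS

theorem IsSeparator.disjoint_reachAvoiding (h : IsSeparator G a b S) :
    Disjoint (G.reachAvoiding S a) (G.reachAvoiding S b) := by
  refine Set.disjoint_left.mpr fun x ⟨p, hp⟩ ⟨q, hq⟩ =>
    h.notMem_reachAvoiding ⟨p.append q.reverse, fun z hz => ?_⟩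
  rw [Walk.mem_support_append_iff, Walk.support_reverse, List.mem_reverse] at hz
  exact hz.elim (hp z) (hq z)

theorem exists_minimal_isSeparator [Finite V] (hab : a ≠ b) (hnadj : ¬G.Adj a b) :
    ∃ S, Minimal (IsSeparator G a b) S := by
  have hsep : IsSeparator G a b {a, b}ᶜ := by
    refine ⟨by simp, by simp, fun p => ?_⟩
    cases p with
    | nil => exact absurd rfl hab
    | @cons _ c _ h q =>
      refine ⟨c, by simp, ?_⟩
      simp only [Set.mem_compl_iff, Set.mem_insert_iff, Set.mem_singleton_iff, not_or]
      exact ⟨h.ne', fun hcb => hnadj (hcb ▸ h)⟩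
  obtain ⟨S, -, hS⟩ := Finite.exists_le_minimal hsep
  exact ⟨S, hS⟩

/-- Otherwise `S \ {x}` would still separate `a` from `b`. -/
theorem exists_adj_mem_reachAvoiding_of_minimal (hS : Minimal (IsSeparator G a b) S)
    (hx : x ∈ S) : ∃ y ∈ G.reachAvoiding S a, G.Adj y x := by
  obtain ⟨p, hp⟩ : ∃ p : G.Walk a b, ∀ z ∈ p.support, z ∉ S \ {x} := by
    by_contra! hcon
    have := hS.2 ⟨fun h => hS.1.1 h.1, fun h => hS.1.2.1 h.1, hcon⟩ Set.sdiff_subset hx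
    simp at this
  obtain ⟨d, hd, hd₁, hd₂⟩ := p.exists_boundary_dart (G.reachAvoiding S a)
    (mem_reachAvoiding_self hS.1.1) hS.1.notMem_reachAvoiding
  have hdS : d.snd ∈ S := by
    by_contra h
    exact hd₂ (mem_reachAvoiding_of_adj hd₁ h d.adj)
  have hdx : d.snd = x := by
    by_contra h
    exact hp _ (p.dart_snd_mem_support_of_mem_darts hd) ⟨hdS, h⟩
  exact ⟨d.fst, hd₁, hdx ▸ d.adj⟩

theorem exists_isPath_isChordless_through_reachAvoiding (hS : Minimal (IsSeparator G a b) S)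
    (hx : x ∈ S) (hy : y ∈ S) :
    ∃ p : G.Walk x y, p.IsPath ∧ p.IsChordless ∧
      ∀ z ∈ p.support, z ≠ x → z ≠ y → z ∈ G.reachAvoiding S a := by
  obtain ⟨x', hx', hxx'⟩ := exists_adj_mem_reachAvoiding_of_minimal hS hx
  obtain ⟨y', hy', hyy'⟩ := exists_adj_mem_reachAvoiding_of_minimal hS hy
  obtain ⟨p, hp⟩ := exists_walk_of_mem_reachAvoiding hx' hy'
  refine ((p.cons hxx'.symm).concat hyy').exists_isPath_isChordless_of_support_subset
    (s := {z | z ≠ x → z ≠ y → z ∈ G.reachAvoiding S a}) fun z hz _ _ => ?_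
  rw [Walk.support_concat, List.mem_append, List.mem_singleton, Walk.support_cons,
    List.mem_cons] at hz
  rcases hz with (rfl | hz) | rfl
  · contradiction
  · exact hp z hz
  · contradiction

theorem Chordal.isClique_of_minimal_isSeparator (hG : Chordal G)
    (hS : Minimal (IsSeparator G a b) S) : G.IsClique S := by
  intro x hx y hy hxy
  by_contra hnadj
  obtain ⟨p, hppath, hpc, hpA⟩ := exists_isPath_isChordless_through_reachAvoiding hS hx hy
  obtain ⟨q, hqpath, hqc, hqB⟩ :=
    exists_isPath_isChordless_through_reachAvoiding (minimal_isSeparator_comm.mp hS) hy hx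
  have hdisj := hS.1.disjoint_reachAvoiding
  have hlong : ∀ r : G.Walk x y, 1 < r.length := fun r =>
    (r.reachable.one_lt_dist_of_ne_of_not_adj hxy hnadj).trans_le (dist_le r)
  have hp := hlong p
  have hq := hlong q.reverse
  rw [Walk.length_reverse] at hq
  have hx_tail : x ∉ p.support.tail :=
    (List.nodup_cons.mp (p.cons_tail_support ▸ hppath.support_nodup)).1
  have hy_tail : y ∉ q.support.tail :=
    (List.nodup_cons.mp (q.cons_tail_support ▸ hqpath.support_nodup)).1
  have hcycle : (p.append q).IsCycle := hppath.isCycle_append hqpath (fun z hzp hzq => by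
    have hzx : z ≠ x := by rintro rfl; exact hx_tail hzp
    have hzy : z ≠ y := by rintro rfl; exact hy_tail hzq
    exact Set.disjoint_left.mp hdisj (hpA z (List.mem_of_mem_tail hzp) hzx hzy)
      (hqB z (List.mem_of_mem_tail hzq) hzy hzx)) (Or.inl hp)
  obtain ⟨u, hu, w, hw, huq, hwp, huw⟩ := (hG x _ hcycle (by rw [Walk.length_append]; omega))
    |>.exists_adj_of_isChordless_append hpc hqc
  have huA := hpA u hu (by rintro rfl; exact huq q.end_mem_support)
    (by rintro rfl; exact huq q.start_mem_support)
  have hwB := hqB w hw (by rintro rfl; exact hwp p.end_mem_support)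
    (by rintro rfl; exact hwp p.start_mem_support)
  exact Set.disjoint_left.mp hdisj
    (mem_reachAvoiding_of_adj huA (notMem_of_mem_reachAvoiding hwB) huw) hwB

end Separator

namespace SimpleGraph

variable {V : Type} {G : SimpleGraph V}

def IsSimplicial (G : SimpleGraph V) (v : V) : Prop :=
  G.IsClique (G.neighborSet v)

theorem isSimplicial_of_eq_top (h : G = ⊤) (v : V) : G.IsSimplicial v := by
  subst h
  exact fun _ _ _ _ hxy => hxy

theorem IsSimplicial.of_induce {W : Set V} {v : W} (hv : (G.induce W).IsSimplicial v)
    (hN : G.neighborSet v ⊆ W) : G.IsSimplicial v :=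
  fun x hx y hy hxy => @hv ⟨x, hN hx⟩ hx ⟨y, hN hy⟩ hy (by simpa using hxy)

end SimpleGraph

section Simplicial

variable {V : Type} {G : SimpleGraph V}

/-- `hpair` is Dirac's lemma for `G[A ∪ S]`, where `A` is the component of `a`; the induction
supplies it. -/
theorem exists_isSimplicial_mem_reachAvoiding {S : Set V} {a b : V}
    (hS : Minimal (IsSeparator G a b) S) (hSc : G.IsClique S)
    (hpair : G.induce (G.reachAvoiding S a ∪ S) ≠ ⊤ → ∃ u w, u ≠ w ∧
      ¬(G.induce (G.reachAvoiding S a ∪ S)).Adj u w ∧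
      (G.induce (G.reachAvoiding S a ∪ S)).IsSimplicial u ∧
      (G.induce (G.reachAvoiding S a ∪ S)).IsSimplicial w) :
    ∃ u ∈ G.reachAvoiding S a, G.IsSimplicial u := by
  have hN : ∀ u ∈ G.reachAvoiding S a, G.neighborSet u ⊆ G.reachAvoiding S a ∪ S :=
    fun u hu y hy => by
      by_cases hyS : y ∈ S
      exacts [Or.inr hyS, Or.inl (mem_reachAvoiding_of_adj hu hyS hy)]
  by_cases htop : G.induce (G.reachAvoiding S a ∪ S) = ⊤
  · have ha := mem_reachAvoiding_self (G := G) hS.1.1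
    exact ⟨a, ha, (isSimplicial_of_eq_top htop ⟨a, Or.inl ha⟩).of_induce (hN a ha)⟩
  obtain ⟨u, w, huw, hnadj, hu, hw⟩ := hpair htop
  have : (u : V) ∉ S ∨ (w : V) ∉ S := by
    by_contra! h
    exact hnadj (hSc h.1 h.2 (Subtype.coe_injective.ne huw))
  rcases this with h | h
  · have hA := u.2.resolve_right h
    exact ⟨u, hA, hu.of_induce (hN u hA)⟩
  · have hA := w.2.resolve_right h
    exact ⟨w, hA, hw.of_induce (hN w hA)⟩

theorem Chordal.exists_isSimplicial_pair [Finite V] (hG : Chordal G) (hG' : G ≠ ⊤) :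
    ∃ u w, u ≠ w ∧ ¬G.Adj u w ∧ G.IsSimplicial u ∧ G.IsSimplicial w := by
  induction h : Nat.card V using Nat.strong_induction_on generalizing V with
  | _ n ih =>
  obtain ⟨a, b, hab, hnadj⟩ := ne_top_iff_exists_not_adj.mp hG'
  obtain ⟨S, hS⟩ := exists_minimal_isSeparator hab hnadj
  have hSc := hG.isClique_of_minimal_isSeparator hS
  have hside : ∀ {a b : V}, Minimal (IsSeparator G a b) S →
      ∃ u ∈ G.reachAvoiding S a, G.IsSimplicial u := fun {a b} hS =>
    exists_isSimplicial_mem_reachAvoiding hS hSc fun hne =>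
      ih _ (h ▸ Finite.card_subtype_lt fun hb => hb.elim hS.1.notMem_reachAvoiding hS.1.2.1)
        (hG.comap_s14 (Embedding.induce _)) hne rfl
  obtain ⟨u, hu, hsu⟩ := hside hS
  obtain ⟨w, hw, hsw⟩ := hside (minimal_isSeparator_comm.mp hS)
  have hdisj := Set.disjoint_left.mp hS.1.disjoint_reachAvoiding
  refine ⟨u, w, ?_, fun huw => hdisj (mem_reachAvoiding_of_adj hu
    (notMem_of_mem_reachAvoiding hw) huw) hw, hsu, hsw⟩
  rintro rfl
  exact hdisj hu hw

theorem Chordal.exists_isSimplicial [Finite V] [Nonempty V] (hG : Chordal G) :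
    ∃ v, G.IsSimplicial v := by
  by_cases h : G = ⊤
  · exact ⟨Classical.arbitrary V, isSimplicial_of_eq_top h _⟩
  · obtain ⟨u, -, -, -, hu, -⟩ := hG.exists_isSimplicial_pair h
    exact ⟨u, hu⟩

theorem Chordal.exists_isClique_neighborSet_inter [Finite V] (hG : Chordal G) {W : Set V}
    (hW : W.Nonempty) : ∃ v ∈ W, G.IsClique (G.neighborSet v ∩ W) := by
  have : Nonempty W := hW.to_subtype
  obtain ⟨v, hv⟩ := (hG.comap_s14 (Embedding.induce W)).exists_isSimplicial
  exact ⟨v, v.2, fun x hx y hy hxy =>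
    @hv ⟨x, hx.2⟩ hx.1 ⟨y, hy.2⟩ hy.1 (by simpa using hxy)⟩

end Simplicial

namespace SimpleGraph

variable {ι : Type}

def addLeaf (T : SimpleGraph ι) (i₀ : ι) : SimpleGraph (ι ⊕ Unit) :=
  (T ⊕g (⊥ : SimpleGraph Unit)) ⊔ edge (.inl i₀) (.inr ())

theorem IsTree.addLeaf [Finite ι] {T : SimpleGraph ι} (hT : T.IsTree) (i₀ : ι) :
    (T.addLeaf i₀).IsTree := by
  rw [isTree_iff_connected_and_card] at hT ⊢
  refine ⟨hT.1.sum_sup_edge .of_subsingleton, ?_⟩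
  have hedges : (T.addLeaf i₀).edgeSet =
      insert s(.inl i₀, .inr ()) (T ⊕g (⊥ : SimpleGraph Unit)).edgeSet := by
    rw [SimpleGraph.addLeaf, edgeSet_sup, edgeSet_edge, Set.union_comm, Set.insert_eq]
    congr
    simp
  have hsum : Nat.card (T ⊕g (⊥ : SimpleGraph Unit)).edgeSet = Nat.card T.edgeSet := by
    rw [Nat.card_congr edgeSetSumEquiv, Nat.card_sum, edgeSet_bot]
    simp
  rw [hedges, Nat.card_coe_set_eq, Set.ncard_insert_of_notMem (by simp), ← Nat.card_coe_set_eq,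
    hsum, Nat.card_sum, ← hT.2, Nat.card_unique (α := Unit)]

theorem Connected.induce_image {V V' : Type} {G : SimpleGraph V} {G' : SimpleGraph V'}
    (f : G →g G') {s : Set V} (h : (G.induce s).Connected) : (G'.induce (f '' s)).Connected :=
  h.map (induceHom f (Set.mapsTo_image f s)) (by rintro ⟨_, x, hx, rfl⟩; exact ⟨⟨x, hx⟩, rfl⟩)

theorem Connected.induce_inl_addLeaf {T : SimpleGraph ι} {s : Set ι} (h : (T.induce s).Connected)
    (i₀ : ι) : ((T.addLeaf i₀).induce (Sum.inl '' s)).Connected :=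
  h.induce_image ((Hom.ofLE le_sup_left).comp Embedding.sumInl.toHom)

theorem Connected.induce_inl_union_addLeaf {T : SimpleGraph ι} {s : Set ι}
    (h : (T.induce s).Connected) {i₀ : ι} (hi₀ : i₀ ∈ s) :
    ((T.addLeaf i₀).induce (Sum.inl '' s ∪ {.inr ()})).Connected :=
  connected_induce_union (h.induce_inl_addLeaf i₀).preconnected .of_subsingleton
    (Set.mem_image_of_mem _ hi₀) rfl (Or.inr (by simp [edge_adj]))

end SimpleGraph

section CliqueTree

variable {V : Type} {G : SimpleGraph V} {W K : Set V} {v : V}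

def IsMaxCliqueIn (G : SimpleGraph V) (W K : Set V) : Prop :=
  Maximal (fun K => G.IsClique K ∧ K ⊆ W) K

theorem isMaxCliqueIn_univ_iff : IsMaxCliqueIn G Set.univ K ↔ IsMaxClique G K :=
  ⟨fun h => ⟨h.1.1, fun T hT hKT => (h.2 ⟨hT, Set.subset_univ T⟩ hKT).antisymm hKT⟩,
    fun h => ⟨⟨h.1, Set.subset_univ K⟩, fun T hT hKT => (h.2 T hT.1 hKT).le⟩⟩

theorem exists_isMaxCliqueIn_superset [Finite V] (hK : G.IsClique K) (hKW : K ⊆ W) :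
    ∃ M, K ⊆ M ∧ IsMaxCliqueIn G W M :=
  Finite.exists_le_maximal (p := fun K => G.IsClique K ∧ K ⊆ W) ⟨hK, hKW⟩

theorem SimpleGraph.IsClique.subset_insert_neighborSet_inter {T : Set V} (hT : G.IsClique T)
    (hTW : T ⊆ Insert.insert v W) (hvT : v ∈ T) :
    T ⊆ Insert.insert v (G.neighborSet v ∩ W) := by
  intro z hz
  by_cases hzv : z = v
  · subst hzv
    exact Set.mem_insert z _
  · exact Set.mem_insert_of_mem v ⟨hT hvT hz (Ne.symm hzv), (hTW hz).resolve_left hzv⟩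

theorem isMaxCliqueIn_insert_iff (hv : v ∉ W) (hN : G.IsClique (G.neighborSet v ∩ W)) :
    IsMaxCliqueIn G (insert v W) K ↔
      K = insert v (G.neighborSet v ∩ W) ∨
        IsMaxCliqueIn G W K ∧ K ≠ G.neighborSet v ∩ W := by
  set N := G.neighborSet v ∩ W
  have hvN : v ∉ N := fun h => hv h.2
  have hNv : G.IsClique (insert v N) ∧ insert v N ⊆ insert v W :=
    ⟨hN.insert fun _ hb _ => hb.1, Set.insert_subset_insert Set.inter_subset_right⟩
  constructor
  · intro hK
    by_cases hvK : v ∈ K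
    · exact .inl (hK.eq_of_le hNv (hK.1.1.subset_insert_neighborSet_inter hK.1.2 hvK))
    · refine .inr ⟨⟨⟨hK.1.1, (Set.subset_insert_iff_of_notMem hvK).mp hK.1.2⟩,
        fun T hT hKT => hK.2 ⟨hT.1, hT.2.trans (Set.subset_insert v W)⟩ hKT⟩, ?_⟩
      rintro rfl
      exact hvN (hK.2 hNv (Set.subset_insert v _) (Set.mem_insert v _))
  · rintro (rfl | ⟨hK, hKN⟩)
    · exact ⟨hNv, fun T hT hle =>
        hT.1.subset_insert_neighborSet_inter hT.2 (hle (Set.mem_insert v N))⟩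
    refine ⟨⟨hK.1.1, hK.1.2.trans (Set.subset_insert v W)⟩, fun T hT hKT => ?_⟩
    by_cases hvT : v ∈ T
    · have hKN' : K ⊆ N := (Set.subset_insert_iff_of_notMem fun h => hv (hK.1.2 h)).mp
        (hKT.trans (hT.1.subset_insert_neighborSet_inter hT.2 hvT))
      exact absurd (hK.eq_of_le ⟨hN, Set.inter_subset_right⟩ hKN') hKN
    · exact hK.2 ⟨hT.1, (Set.subset_insert_iff_of_notMem hvT).mp hT.2⟩ hKT

theorem mem_swap_insert_iff {A K : Set V} {u : V} (hu : u ≠ v) :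
    u ∈ Equiv.swap A (insert v A) K ↔ u ∈ K := by
  rw [Equiv.swap_apply_def]
  split_ifs with h₁ h₂
  · simp [h₁, hu]
  · simp [h₂, hu]
  · rfl

/-- A clique tree of `G[W]`. Covering vertices and edges is not required: it follows from every
maximal clique being a bag. -/
structure IsCliqueTreeOn {ι : Type} (G : SimpleGraph V) (W : Set V) (T : SimpleGraph ι)
    (bag : ι → Set V) : Prop where
  isTree : T.IsTree
  injective : Function.Injective bag
  mem_range_iff : ∀ K, K ∈ Set.range bag ↔ IsMaxCliqueIn G W K
  connected : ∀ u ∈ W, (T.induce {i | u ∈ bag i}).Connected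

namespace IsCliqueTreeOn

variable {ι : Type} {T : SimpleGraph ι} {bag : ι → Set V}

theorem empty : IsCliqueTreeOn G ∅ (⊥ : SimpleGraph Unit) fun _ => ∅ where
  isTree := .of_subsingleton
  injective := Function.injective_of_subsingleton _
  mem_range_iff K := by
    rw [Set.range_const, Set.mem_singleton_iff]
    refine ⟨?_, fun h => Set.subset_empty_iff.mp h.1.2⟩
    rintro rfl
    exact ⟨⟨Set.pairwise_empty _, subset_rfl⟩, fun T hT _ => hT.2⟩
  connected _ h := absurd h (Set.notMem_empty _)

theorem subset (h : IsCliqueTreeOn G W T bag) (i : ι) : bag i ⊆ W :=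
  ((h.mem_range_iff _).mp ⟨i, rfl⟩).1.2

theorem exists_subset_bag [Finite V] (h : IsCliqueTreeOn G W T bag) (hK : G.IsClique K)
    (hKW : K ⊆ W) : ∃ i, K ⊆ bag i := by
  obtain ⟨M, hKM, hM⟩ := exists_isMaxCliqueIn_superset hK hKW
  obtain ⟨i, rfl⟩ := (h.mem_range_iff M).mpr hM
  exact ⟨i, hKM⟩

theorem isTreeDecomposition [Finite V] (h : IsCliqueTreeOn G Set.univ T bag) :
    IsTreeDecomposition G T bag := by
  refine ⟨h.isTree, fun v => ?_, fun u w huw => ?_, fun v => h.connected v trivial⟩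
  · obtain ⟨i, hi⟩ := h.exists_subset_bag (G.isClique_singleton v) (Set.subset_univ _)
    exact ⟨i, hi rfl⟩
  · obtain ⟨i, hi⟩ := h.exists_subset_bag (isClique_pair.mpr fun _ => huw) (Set.subset_univ _)
    exact ⟨i, hi (Set.mem_insert u _), hi (Set.mem_insert_of_mem u rfl)⟩

/-- The bag `N` becomes `insert v N`; composing with the transposition of the two is the same,
since `insert v N` is not a bag. -/
theorem insert_of_isMaxCliqueIn (h : IsCliqueTreeOn G W T bag) (hv : v ∉ W)
    (hN : G.IsClique (G.neighborSet v ∩ W)) (hNmax : IsMaxCliqueIn G W (G.neighborSet v ∩ W)) :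
    IsCliqueTreeOn G (insert v W) T
      (Equiv.swap (G.neighborSet v ∩ W) (insert v (G.neighborSet v ∩ W)) ∘ bag) := by
  set N := G.neighborSet v ∩ W with hNdef
  have hvN : N ≠ insert v N := fun h => hv (h ▸ Set.mem_insert v N : v ∈ N).2
  have hvbag : ∀ i, v ∉ bag i := fun i hvi => hv (h.subset i hvi)
  obtain ⟨i₀, hi₀⟩ := (h.mem_range_iff N).mpr hNmax
  refine ⟨h.isTree, (Equiv.injective _).comp h.injective, fun K => ?_, fun u hu => ?_⟩
  · rw [Set.range_comp, Set.mem_image_equiv, Equiv.symm_swap, h.mem_range_iff,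
      isMaxCliqueIn_insert_iff hv hN, ← hNdef, Equiv.swap_apply_def]
    split_ifs with h₁ h₂
    · subst h₁
      simp only [hvN, ne_eq, not_true_eq_false, and_false, or_false, iff_false]
      exact fun hmax : IsMaxCliqueIn G W (insert v N) => hv (hmax.1.2 (Set.mem_insert v N))
    · simp [h₂, hNmax]
    · simp [h₁, h₂]
  rcases hu with rfl | huW
  · have hset : {i | u ∈ (Equiv.swap N (insert u N) ∘ bag) i} = {i₀} := by
      ext i
      simp only [Set.mem_ofPred_eq, Function.comp_apply, Set.mem_singleton_iff,
        Equiv.swap_apply_def]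
      split_ifs with h₁ h₂
      · simpa using h.injective (h₁.trans hi₀.symm)
      · exact absurd (h₂ ▸ Set.mem_insert u N) (hvbag i)
      · exact iff_of_false (hvbag i) fun h' => h₁ (h' ▸ hi₀)
    rw [hset, induce_singleton_eq_top]
    exact connected_top
  · have hset : {i | u ∈ (Equiv.swap N (insert v N) ∘ bag) i} = {i | u ∈ bag i} := by
      ext i
      exact mem_swap_insert_iff (fun h => hv (h ▸ huW))
    rw [hset]
    exact h.connected u huW

theorem insert_of_not_isMaxCliqueIn [Finite ι] (h : IsCliqueTreeOn G W T bag) (hv : v ∉ W)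
    (hN : G.IsClique (G.neighborSet v ∩ W)) (hNmax : ¬IsMaxCliqueIn G W (G.neighborSet v ∩ W))
    {i₀ : ι} (hi₀ : G.neighborSet v ∩ W ⊆ bag i₀) :
    IsCliqueTreeOn G (insert v W) (T.addLeaf i₀)
      (Sum.elim bag fun _ => insert v (G.neighborSet v ∩ W)) := by
  set N := G.neighborSet v ∩ W
  have hvbag : ∀ i, v ∉ bag i := fun i hvi => hv (h.subset i hvi)
  refine ⟨h.isTree.addLeaf i₀, h.injective.sumElim (Function.injective_of_subsingleton _)
    fun i _ hi => hvbag i (hi ▸ Set.mem_insert v N), fun K => ?_, fun u hu => ?_⟩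
  · rw [Set.Sum.elim_range, Set.range_const, Set.mem_union, h.mem_range_iff,
      isMaxCliqueIn_insert_iff hv hN, Set.mem_singleton_iff, or_comm]
    exact or_congr_right ⟨fun hK => ⟨hK, by rintro rfl; exact hNmax hK⟩, And.left⟩
  rcases hu with rfl | huW
  · have hset : {x | u ∈ Sum.elim bag (fun _ => insert u N) x} = {.inr ()} := by
      ext (i | ⟨⟩) <;> simp [hvbag]
    rw [hset, induce_singleton_eq_top]
    exact connected_top
  by_cases huN : u ∈ N
  · have hset : {x | u ∈ Sum.elim bag (fun _ => insert v N) x} =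
        Sum.inl '' {i | u ∈ bag i} ∪ {.inr ()} := by
      ext (i | ⟨⟩) <;> simp [huN]
    rw [hset]
    exact (h.connected u huW).induce_inl_union_addLeaf (hi₀ huN)
  · have huv : u ≠ v := fun h => hv (h ▸ huW)
    have hset : {x | u ∈ Sum.elim bag (fun _ => insert v N) x} =
        (Sum.inl '' {i | u ∈ bag i} : Set (ι ⊕ Unit)) := by
      ext (i | ⟨⟩) <;> simp [huN, huv]
    rw [hset]
    exact (h.connected u huW).induce_inl_addLeaf i₀

end IsCliqueTreeOn

theorem Chordal.exists_isCliqueTreeOn [Finite V] (hG : Chordal G) (W : Set V) :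
    ∃ (ι : Type) (T : SimpleGraph ι) (bag : ι → Set V), IsCliqueTreeOn G W T bag := by
  induction W using WellFoundedLT.induction with
  | _ W ih =>
  rcases W.eq_empty_or_nonempty with rfl | hW
  · exact ⟨Unit, ⊥, fun _ => ∅, .empty⟩
  obtain ⟨v, hvW, hvN⟩ := hG.exists_isClique_neighborSet_inter hW
  obtain ⟨ι, T, bag, h⟩ := ih (W \ {v}) (Set.sdiff_singleton_ssubset.mpr hvW)
  have hv : v ∉ W \ {v} := fun h => h.2 rfl
  have hN : G.IsClique (G.neighborSet v ∩ (W \ {v})) :=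
    hvN.subset (Set.inter_subset_inter_right _ Set.sdiff_subset)
  rw [← Set.insert_eq_of_mem hvW, ← Set.insert_sdiff_singleton]
  by_cases hmax : IsMaxCliqueIn G (W \ {v}) (G.neighborSet v ∩ (W \ {v}))
  · exact ⟨ι, T, _, h.insert_of_isMaxCliqueIn hv hN hmax⟩
  have : Finite ι := .of_injective bag h.injective
  obtain ⟨i₀, hi₀⟩ := h.exists_subset_bag hN Set.inter_subset_right
  exact ⟨ι ⊕ Unit, _, _, h.insert_of_not_isMaxCliqueIn hv hN hmax hi₀⟩

end CliqueTree

/-- Buneman–Gavril: every chordal graph has a tree decomposition whose bags are exactly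
its maximal cliques (a clique tree). -/
theorem stmt_14 {V : Type} [Fintype V] (G : SimpleGraph V) (hG : Chordal G) :
    ∃ (ι : Type) (T : SimpleGraph ι) (bag : ι → Set V),
      IsTreeDecomposition G T bag ∧ Function.Injective bag ∧
      (∀ i, IsMaxClique G (bag i)) ∧ (∀ S : Set V, IsMaxClique G S → ∃ i, bag i = S) := by
  obtain ⟨ι, T, bag, h⟩ := hG.exists_isCliqueTreeOn Set.univ
  refine ⟨ι, T, bag, h.isTreeDecomposition, h.injective, fun i => ?_, fun S hS => ?_⟩
  · exact isMaxCliqueIn_univ_iff.mp ((h.mem_range_iff _).mp ⟨i, rfl⟩)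
  · exact (h.mem_range_iff S).mpr (isMaxCliqueIn_univ_iff.mpr hS)
end
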